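/- Let Φ be a crystallographic root system and R ⊆ Φ a Φ-poset. R has no proper extension (i.e. R is the unique Φ-poset containing R) if and only if {α, -α} ∩ R ≠ ∅ for every α ∈ Φ. -/

import Mathlib

open Pointwise

structure RootSys (V : Type*) [NormedAddCommGroup V] [InnerProductSpace ℝ V] where
  Φ : Set V
  finite : Φ.Finite
  nonzero : ∀ α ∈ Φ, α ≠ (0 : V)
  line : ∀ α ∈ Φ, Φ ∩ {x : V | ∃ t : ℝ, x = t • α} = {α, -α}
  reflect : ∀ α ∈ Φ, ∀ β ∈ Φ, β - (2 * (inner ℝ α β : ℝ) / (inner ℝ α α : ℝ)) • α ∈ Φ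

variable {V : Type*} [NormedAddCommGroup V] [InnerProductSpace ℝ V]

/-- `Φ` is crystallographic: `⟨α^∨, β⟩ ∈ ℤ` for all roots `α, β`. -/
def RootSys.IsCrystallographic (R : RootSys V) : Prop :=
  ∀ α ∈ R.Φ, ∀ β ∈ R.Φ, ∃ n : ℤ, 2 * (inner ℝ α β : ℝ) / (inner ℝ α α : ℝ) = (n : ℝ)

/-- A subset `S ⊆ Φ` is closed if it is stable under sums of two elements staying in `Φ`. -/
def RootSys.IsClosedSubset (R : RootSys V) (S : Set V) : Prop :=
  ∀ α ∈ S, ∀ β ∈ S, α + β ∈ R.Φ → α + β ∈ S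

/-- A set of roots is antisymmetric if it never contains both `α` and `-α`. -/
def IsAntisymSet (S : Set V) : Prop := ∀ α ∈ S, -α ∉ S

/-- A `Φ`-poset: an antisymmetric closed subset of `Φ`. -/
def RootSys.IsPoset (R : RootSys V) (S : Set V) : Prop :=
  S ⊆ R.Φ ∧ IsAntisymSet S ∧ R.IsClosedSubset S

/-- Closure: roots that are nonnegative integer combinations (multiset sums) of elements of `T`. -/
def RootSys.clos (R : RootSys V) (T : Set V) : Set V :=
  {γ ∈ R.Φ | ∃ M : Multiset V, (∀ x ∈ M, x ∈ T) ∧ M.sum = γ}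

/-- Nonnegative integer combinations (multiset sums) of elements of `T`. -/
def nncomb (T : Set V) : Set V :=
  {v | ∃ M : Multiset V, (∀ x ∈ M, x ∈ T) ∧ M.sum = v}

/-- A root system equipped with a generic linear functional determining positive roots. -/
structure PosRootSys (V : Type*) [NormedAddCommGroup V] [InnerProductSpace ℝ V]
    extends RootSys V where
  f : V →ₗ[ℝ] ℝ
  generic : ∀ α ∈ Φ, f α ≠ 0

def PosRootSys.Pos (P : PosRootSys V) : Set V := {α ∈ P.Φ | 0 < P.f α}

def PosRootSys.Neg (P : PosRootSys V) : Set V := {α ∈ P.Φ | P.f α < 0}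

/-- The weak order: `R ≼ S` iff `R⁺ ⊇ S⁺` and `R⁻ ⊆ S⁻`. -/
def PosRootSys.wle (P : PosRootSys V) (R S : Set V) : Prop :=
  S ∩ P.Pos ⊆ R ∩ P.Pos ∧ R ∩ P.Neg ⊆ S ∩ P.Neg

/-- `R` is semiclosed if both `R⁺` and `R⁻` are closed. -/
def PosRootSys.SemiClosed (P : PosRootSys V) (S : Set V) : Prop :=
  S ⊆ P.Φ ∧ P.toRootSys.IsClosedSubset (S ∩ P.Pos) ∧
    P.toRootSys.IsClosedSubset (S ∩ P.Neg)

/-- Negative closure deletion. -/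
def PosRootSys.ncd (P : PosRootSys V) (S : Set V) : Set V :=
  S \ {α | α ∈ S ∩ P.Neg ∧ ∃ X : Finset V, ↑X ⊆ S ∩ P.Pos ∧ α + X.sum id ∈ P.Φ \ S}

/-- Positive closure deletion. -/
def PosRootSys.pcd (P : PosRootSys V) (S : Set V) : Set V :=
  S \ {α | α ∈ S ∩ P.Pos ∧ ∃ X : Finset V, ↑X ⊆ S ∩ P.Neg ∧ α + X.sum id ∈ P.Φ \ S}

/-- Meet formula on closed subsets. -/
def PosRootSys.wmeet (P : PosRootSys V) (R S : Set V) : Set V :=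
  P.ncd (P.toRootSys.clos ((R ∪ S) ∩ P.Pos) ∪ ((R ∩ S) ∩ P.Neg))

/-- Join formula on closed subsets. -/
def PosRootSys.wjoin (P : PosRootSys V) (R S : Set V) : Set V :=
  P.pcd (((R ∩ S) ∩ P.Pos) ∪ P.toRootSys.clos ((R ∪ S) ∩ P.Neg))

/-!
A Φ-poset `S` is closed under all finite sums that are roots: in a sum `v` of elements of `S`
some summand `x` has `⟪v, x⟫ > 0`, so by crystallography `v - x` is again a root, and induction
applies. Consequently the additive monoid generated by `S` contains no pair `a, -a` with
`a ≠ 0`. If neither `α` nor `-α` lies in `S`, consider the roots in the monoids generated by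
`S ∪ {α}` and by `S ∪ {-α}`; these are closed, and if both fail to be antisymmetric, then
`-kα` and `lα` lie in the monoid generated by `S` for some `k, l > 0`, which is impossible.
So one of them is a proper extension of `S`.
-/

open RealInnerProductSpace

lemma exists_mem_inner_pos_of_inner_sum_pos {v : V} {M : Multiset V} (h : 0 < ⟪v, M.sum⟫) :
    ∃ x ∈ M, 0 < ⟪v, x⟫ := by
  induction M using Multiset.induction_on with
  | empty => simp at h
  | cons a M ih =>
    rw [Multiset.sum_cons, inner_add_right] at h
    by_cases ha : 0 < ⟪v, a⟫
    · exact ⟨a, Multiset.mem_cons_self a M, ha⟩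
    · obtain ⟨x, hx, hvx⟩ := ih (by linarith)
      exact ⟨x, Multiset.mem_cons_of_mem hx, hvx⟩

namespace RootSys

variable {R : RootSys V} {S : Set V}

lemma neg_mem {α : V} (hα : α ∈ R.Φ) : -α ∈ R.Φ :=
  (R.line α hα).symm.subset (Set.mem_insert_of_mem α rfl) |>.1

/-- The Cartan integers `⟨α^∨, β⟩`, `⟨β^∨, α⟩` are positive; if neither is `1`, Cauchy–Schwarz
forces both to be `2` and then `‖α - β‖ = 0`. -/
lemma sub_mem_of_inner_pos (hcr : R.IsCrystallographic) {α β : V} (hα : α ∈ R.Φ) (hβ : β ∈ R.Φ)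
    (hpos : 0 < ⟪α, β⟫) (hne : α ≠ β) : α - β ∈ R.Φ := by
  have ha : 0 < ⟪α, α⟫ := real_inner_self_pos.2 (R.nonzero α hα)
  have hb : 0 < ⟪β, β⟫ := real_inner_self_pos.2 (R.nonzero β hβ)
  obtain ⟨n, hn⟩ := hcr α hα β hβ
  obtain ⟨m, hm⟩ := hcr β hβ α hα
  rw [real_inner_comm] at hm
  have hn' : 2 * ⟪α, β⟫ = n * ⟪α, α⟫ := by field_simp at hn; linarith
  have hm' : 2 * ⟪α, β⟫ = m * ⟪β, β⟫ := by field_simp at hm; linarith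
  by_cases hn1 : n = 1
  · have h := R.neg_mem (R.reflect α hα β hβ)
    rwa [hn, hn1, Int.cast_one, one_smul, neg_sub] at h
  by_cases hm1 : m = 1
  · have h := R.reflect β hβ α hα
    rwa [real_inner_comm, hm, hm1, Int.cast_one, one_smul] at h
  have hn0 : 0 < n := by
    have : (0 : ℝ) < n := by nlinarith
    exact_mod_cast this
  have hm0 : 0 < m := by
    have : (0 : ℝ) < m := by nlinarith
    exact_mod_cast this
  have hn2 : (2 : ℝ) ≤ n := by exact_mod_cast (by omega : 2 ≤ n)
  have hm2 : (2 : ℝ) ≤ m := by exact_mod_cast (by omega : 2 ≤ m)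
  have hcs := real_inner_mul_inner_self_le α β
  have hαβ : ⟪α, β⟫ = ⟪α, α⟫ := by nlinarith
  have hβα : ⟪α, β⟫ = ⟪β, β⟫ := by nlinarith
  refine absurd (sub_eq_zero.1 ((inner_self_eq_zero (𝕜 := ℝ)).1 ?_)) hne
  rw [real_inner_sub_sub_self]
  linarith

lemma IsPoset.mem_of_mem_closure (hcr : R.IsCrystallographic) (hS : R.IsPoset S) {v : V}
    (hv : v ∈ AddSubmonoid.closure S) (hvΦ : v ∈ R.Φ) : v ∈ S := by
  classical
  obtain ⟨M, hMS, rfl⟩ := AddSubmonoid.exists_multiset_of_mem_closure hv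
  clear hv
  induction M using Multiset.strongInductionOn with
  | ih M ih =>
    obtain ⟨x, hxM, hx⟩ :=
      exists_mem_inner_pos_of_inner_sum_pos (real_inner_self_pos.2 (R.nonzero _ hvΦ))
    have hxS := hMS x hxM
    by_cases hvx : M.sum = x
    · exact hvx ▸ hxS
    have hrestΦ : (M.erase x).sum ∈ R.Φ := by
      simpa [← Multiset.sum_erase hxM] using R.sub_mem_of_inner_pos hcr hvΦ (hS.1 hxS) hx hvx
    have hrest := ih _ (Multiset.erase_lt.2 hxM) (fun y hy => hMS y (Multiset.mem_of_mem_erase hy))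
      hrestΦ
    rw [← Multiset.sum_erase hxM] at hvΦ ⊢
    exact hS.2.2 x hxS _ hrest hvΦ

lemma IsPoset.eq_zero_of_add_eq_zero (hcr : R.IsCrystallographic) (hS : R.IsPoset S) {a b : V}
    (ha : a ∈ AddSubmonoid.closure S) (hb : b ∈ AddSubmonoid.closure S) (hab : a + b = 0) :
    a = 0 := by
  induction ha using AddSubmonoid.closure_induction_left with
  | zero => rfl
  | add_left x hx y hy _ =>
    have hyb : y + b = -x := (neg_eq_of_add_eq_zero_right (by rwa [← add_assoc])).symm
    have hnx : -x ∈ S :=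
      hyb ▸ hS.mem_of_mem_closure hcr (add_mem hy hb) (hyb ▸ R.neg_mem (hS.1 hx))
    exact absurd hnx (hS.2.1 x hx)

lemma IsPoset.exists_nsmul_neg_mem_closure (hcr : R.IsCrystallographic) (hS : R.IsPoset S)
    {γ : V} (h : ¬ IsAntisymSet (R.Φ ∩ AddSubmonoid.closure (insert γ S))) :
    ∃ k : ℕ, k ≠ 0 ∧ k • -γ ∈ AddSubmonoid.closure S := by
  simp only [IsAntisymSet, not_forall, not_not] at h
  obtain ⟨β, ⟨hβΦ, hβ⟩, -, hnβ⟩ := h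
  simp only [Set.insert_eq, AddSubmonoid.closure_union, AddSubmonoid.mem_sup,
    AddSubmonoid.mem_closure_singleton, SetLike.mem_coe] at hβ hnβ
  obtain ⟨_, ⟨k₁, rfl⟩, s₁, hs₁, hβ⟩ := hβ
  obtain ⟨_, ⟨k₂, rfl⟩, s₂, hs₂, hnβ⟩ := hnβ
  have hsum : s₁ + s₂ = (k₁ + k₂) • -γ := by
    rw [smul_neg, add_smul, eq_neg_iff_add_eq_zero]
    linear_combination (norm := module) hβ + hnβ
  refine ⟨k₁ + k₂, fun hk => ?_, hsum ▸ add_mem hs₁ hs₂⟩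
  have hs₁0 := hS.eq_zero_of_add_eq_zero hcr hs₁ hs₂ (by rw [hsum, hk, zero_smul])
  obtain rfl : k₁ = 0 := by omega
  exact R.nonzero β hβΦ (by rw [← hβ, hs₁0, zero_smul, add_zero])

lemma IsPoset.isAntisymSet_or (hcr : R.IsCrystallographic) (hS : R.IsPoset S) {γ : V}
    (hγ : γ ≠ 0) :
    IsAntisymSet (R.Φ ∩ AddSubmonoid.closure (insert γ S)) ∨
      IsAntisymSet (R.Φ ∩ AddSubmonoid.closure (insert (-γ) S)) := by
  by_contra! ⟨h₁, h₂⟩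
  obtain ⟨k, hk, hkγ⟩ := hS.exists_nsmul_neg_mem_closure hcr h₁
  obtain ⟨l, hl, hlγ⟩ := hS.exists_nsmul_neg_mem_closure hcr h₂
  rw [neg_neg] at hlγ
  have h0 := hS.eq_zero_of_add_eq_zero hcr (nsmul_mem hkγ l) (nsmul_mem hlγ k)
    (by module)
  rw [smul_smul, ← Nat.cast_smul_eq_nsmul ℝ, smul_eq_zero] at h0
  simp_all

lemma isPoset_inter_closure {T : Set V} (h : IsAntisymSet (R.Φ ∩ AddSubmonoid.closure T)) :
    R.IsPoset (R.Φ ∩ AddSubmonoid.closure T) :=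
  ⟨Set.inter_subset_left, h, fun _ ha _ hb hab => ⟨hab, add_mem ha.2 hb.2⟩⟩

lemma mem_of_maximal_of_isAntisymSet (hmax : ∀ T : Set V, R.IsPoset T → S ⊆ T → T = S)
    (hS : S ⊆ R.Φ) {γ : V} (hγ : γ ∈ R.Φ)
    (h : IsAntisymSet (R.Φ ∩ AddSubmonoid.closure (insert γ S))) : γ ∈ S := by
  have hT := hmax _ (isPoset_inter_closure h)
    fun s hs => ⟨hS hs, AddSubmonoid.subset_closure (Set.mem_insert_of_mem γ hs)⟩
  exact hT ▸ ⟨hγ, AddSubmonoid.subset_closure (Set.mem_insert γ S)⟩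

lemma IsPoset.eq_of_subset {T : Set V} (hT : R.IsPoset T) (hST : S ⊆ T)
    (h : ∀ α ∈ R.Φ, α ∈ S ∨ -α ∈ S) : T = S := by
  refine hST.antisymm' fun α hα => (h α (hT.1 hα)).resolve_right fun hnα => ?_
  exact hT.2.1 α hα (hST hnα)

end RootSys

theorem stmt6 (R : RootSys V) (hcr : R.IsCrystallographic)
    (S : Set V) (hS : R.IsPoset S) :
    (∀ T : Set V, R.IsPoset T → S ⊆ T → T = S) ↔ (∀ α ∈ R.Φ, α ∈ S ∨ -α ∈ S) := by
  refine ⟨fun hmax α hα => ?_, fun h T hT hST => hT.eq_of_subset hST h⟩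
  by_contra! hnot
  rcases hS.isAntisymSet_or hcr (R.nonzero α hα) with h | h
  · exact hnot.1 (RootSys.mem_of_maximal_of_isAntisymSet hmax hS.1 hα h)
  · exact hnot.2 (RootSys.mem_of_maximal_of_isAntisymSet hmax hS.1 (R.neg_mem hα) h)
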